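/- Let D be a digraph and 𝒰 a finite set of vertex sets of D. Then the following are equivalent: (i) D has an end in the closure of 𝒰; (ii) D has a vertex-direction in the closure of 𝒰; (iii) D contains a necklace attached to 𝒰. -/

import Mathlib

variable {V : Type*}

/-- Reachability from `a` to `b` by a directed walk staying inside the vertex set `S`. -/
def ReachIn (D : V → V → Prop) (S : Set V) (a b : V) : Prop :=
  a ∈ S ∧ b ∈ S ∧ Relation.ReflTransGen (fun x y => y ∈ S ∧ D x y) a b

/-- `C` is a strong component of the subdigraph of `D` induced on `S`. -/
def IsSCCIn (D : V → V → Prop) (S : Set V) (C : Set V) : Prop :=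
  ∃ a ∈ S, C = {b | ReachIn D S a b ∧ ReachIn D S b a}

/-- A directed ray in `D`. -/
def IsRay (D : V → V → Prop) (R : ℕ → V) : Prop :=
  Function.Injective R ∧ ∀ n, D (R n) (R (n + 1))

/-- A reverse directed ray in `D`. -/
def IsRevRay (D : V → V → Prop) (R : ℕ → V) : Prop :=
  Function.Injective R ∧ ∀ n, D (R (n + 1)) (R n)

/-- The ray `R` has a tail inside the vertex set `C`. -/
def HasTailIn (R : ℕ → V) (C : Set V) : Prop :=
  ∃ n, ∀ m, n ≤ m → R m ∈ C

/-- A solid ray: for every finite `X` it has a tail in some strong component of `D − X`. -/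
def Solid (D : V → V → Prop) (R : ℕ → V) : Prop :=
  IsRay D R ∧ ∀ X : Finset V, ∃ C, IsSCCIn D ((↑X : Set V)ᶜ) C ∧ HasTailIn R C

/-- Two solid rays are end-equivalent: for every finite `X` they have tails in the same
strong component of `D − X`. -/
def EndEquiv (D : V → V → Prop) (R R' : ℕ → V) : Prop :=
  ∀ X : Finset V, ∃ C, IsSCCIn D ((↑X : Set V)ᶜ) C ∧ HasTailIn R C ∧ HasTailIn R' C

/-- `Ω` is an end of `D`: the class of solid rays equivalent to some solid ray. -/
def IsEnd (D : V → V → Prop) (Ω : Set (ℕ → V)) : Prop :=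
  ∃ R, Solid D R ∧ Ω = {R' | Solid D R' ∧ EndEquiv D R R'}

/-- A (nonempty) directed path, recorded as its list of vertices. -/
def IsPathList (D : V → V → Prop) (l : List V) : Prop :=
  l ≠ [] ∧ l.Nodup ∧ l.Chain' D

/-- Infinitely many pairwise disjoint `A`–`B` paths in `D` (each meeting `A` precisely in its
first vertex and `B` precisely in its last vertex). -/
def DisjointPathsFrom (D : V → V → Prop) (A B : Set V) : Prop :=
  ∃ P : ℕ → List V,
    (∀ k, IsPathList D (P k)) ∧
    (∀ j k, j ≠ k → ∀ x ∈ P j, x ∉ P k) ∧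
    (∀ k, ∃ a, (P k).head? = some a ∧ a ∈ A) ∧
    (∀ k, ∃ b, (P k).getLast? = some b ∧ b ∈ B) ∧
    (∀ k, ∀ x ∈ (P k).tail, x ∉ A) ∧
    (∀ k, ∀ x ∈ (P k).dropLast, x ∉ B)

/-- A necklace in `D`: an inflated symmetric ray with finite branch sets (beads), given by its
beads together with the connecting (subdividing) paths in both directions. -/
structure Necklace (D : V → V → Prop) where
  bead : ℕ → Set V
  fwd : ℕ → List V
  bwd : ℕ → List V
  bead_fin : ∀ n, (bead n).Finite
  bead_nonempty : ∀ n, (bead n).Nonempty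
  bead_disj : ∀ m n, m ≠ n → Disjoint (bead m) (bead n)
  bead_strong : ∀ n, ∀ a ∈ bead n, ∀ b ∈ bead n, ReachIn D (bead n) a b
  fwd_path : ∀ n, IsPathList D (fwd n)
  bwd_path : ∀ n, IsPathList D (bwd n)
  fwd_head : ∀ n a, (fwd n).head? = some a → a ∈ bead n
  fwd_last : ∀ n b, (fwd n).getLast? = some b → b ∈ bead (n + 1)
  bwd_head : ∀ n a, (bwd n).head? = some a → a ∈ bead (n + 1)
  bwd_last : ∀ n b, (bwd n).getLast? = some b → b ∈ bead n
  fwd_inner : ∀ n, ∀ x ∈ (fwd n).tail.dropLast, ∀ m, x ∉ bead m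
  bwd_inner : ∀ n, ∀ x ∈ (bwd n).tail.dropLast, ∀ m, x ∉ bead m
  fwd_fwd_disj : ∀ m n, m ≠ n → ∀ x ∈ (fwd m).tail.dropLast, x ∉ (fwd n).tail.dropLast
  bwd_bwd_disj : ∀ m n, m ≠ n → ∀ x ∈ (bwd m).tail.dropLast, x ∉ (bwd n).tail.dropLast
  fwd_bwd_disj : ∀ m n, ∀ x ∈ (fwd m).tail.dropLast, x ∉ (bwd n).tail.dropLast

/-- The vertex set of a necklace. -/
def Necklace.verts {D : V → V → Prop} (N : Necklace D) : Set V :=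
  (⋃ n, N.bead n) ∪ {x | ∃ n, x ∈ N.fwd n ∨ x ∈ N.bwd n}

/-- A necklace is attached to `𝒰` if infinitely many of its beads meet every set in `𝒰`. -/
def Necklace.AttachedTo {D : V → V → Prop} (N : Necklace D) (𝒰 : Finset (Set V)) : Prop :=
  {n | ∀ U ∈ 𝒰, (N.bead n ∩ U).Nonempty}.Infinite

/-- A necklace represents the end of the solid ray `R`: for every finite `X`, all but finitely
many beads lie in the strong component of `D − X` in which `R` has a tail. -/
def NecklaceRepresents {D : V → V → Prop} (N : Necklace D) (R : ℕ → V) : Prop :=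
  ∀ X : Finset V, ∃ C, IsSCCIn D ((↑X : Set V)ᶜ) C ∧ HasTailIn R C ∧
    ∃ n₀, ∀ n, n₀ ≤ n → N.bead n ⊆ C

/-- `URankLE D 𝒰 S α`: the subdigraph of `D` induced on `S` has `𝒰`-rank at most `α`. -/
inductive URankLE (D : V → V → Prop) (𝒰 : Finset (Set V)) : Set V → Ordinal → Prop
  | base (S : Set V) (α : Ordinal) (U : Set V) (hU : U ∈ 𝒰) (h : (U ∩ S).Finite) :
      URankLE D 𝒰 S α
  | step (S : Set V) (α : Ordinal) (X : Finset V) (r : Set V → Ordinal)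
      (hr : ∀ C, IsSCCIn D (S \ ↑X) C → r C < α)
      (h : ∀ C, IsSCCIn D (S \ ↑X) C → URankLE D 𝒰 C (r C)) :
      URankLE D 𝒰 S α

/-- `D` (induced on `S`) has `𝒰`-rank exactly `α`. -/
def HasURank (D : V → V → Prop) (𝒰 : Finset (Set V)) (S : Set V) (α : Ordinal) : Prop :=
  URankLE D 𝒰 S α ∧ ∀ β < α, ¬ URankLE D 𝒰 S β

/-- A vertex-direction of `D`. -/
def IsVertexDirection (D : V → V → Prop) (f : Finset V → Set V) : Prop :=
  (∀ X : Finset V, IsSCCIn D ((↑X : Set V)ᶜ) (f X)) ∧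
  ∀ X Y : Finset V, X ⊆ Y → f Y ⊆ f X

/-- A separation `(A,B)` of `D`: `A ∪ B = V(D)` and no edge from `B∖A` to `A∖B`. -/
def IsSep (D : V → V → Prop) (A B : Set V) : Prop :=
  A ∪ B = Set.univ ∧ ∀ a ∈ B \ A, ∀ b ∈ A \ B, ¬ D a b

/-- A finite order separation `(A,B)` points towards the vertex-direction `f`. -/
def PointsTowards (D : V → V → Prop) (f : Finset V → Set V) (A B : Set V)
    (h : (A ∩ B).Finite) : Prop :=
  f h.toFinset ⊆ B \ A

/-- A finite order separation `(A,B)` points away from the vertex-direction `f`. -/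
def PointsAway (D : V → V → Prop) (f : Finset V → Set V) (A B : Set V)
    (h : (A ∩ B).Finite) : Prop :=
  f h.toFinset ⊆ A \ B

/-- The vertex `v` dominates the vertex-direction `f`. -/
def DomDir (D : V → V → Prop) (v : V) (f : Finset V → Set V) : Prop :=
  ∀ A B, IsSep D A B → ∀ h : (A ∩ B).Finite, PointsAway D f A B h → v ∈ A

/-- An infinite `v`–`B` fan: infinitely many `v`–`B` paths meeting pairwise precisely in `v`. -/
def Fan (D : V → V → Prop) (v : V) (B : Set V) : Prop :=
  ∃ P : ℕ → List V,
    (∀ k, IsPathList D (P k)) ∧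
    (∀ k, (P k).head? = some v) ∧
    (∀ k, 2 ≤ (P k).length) ∧
    (∀ k, ∃ b, (P k).getLast? = some b ∧ b ∈ B) ∧
    (∀ k, ∀ x ∈ (P k).dropLast, x ∉ B) ∧
    (∀ j k, j ≠ k → ∀ x ∈ (P j).tail, x ∉ (P k).tail)

/-- Limit edge between the ends of the solid rays `R` and `R'`. -/
def LimitEdgeEE (D : V → V → Prop) (R R' : ℕ → V) : Prop :=
  ∀ (X : Finset V) C C', IsSCCIn D ((↑X : Set V)ᶜ) C → HasTailIn R C →
    IsSCCIn D ((↑X : Set V)ᶜ) C' → HasTailIn R' C' → C ≠ C' →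
    ∃ a ∈ C, ∃ b ∈ C', D a b

/-- Limit edge from the vertex `v` to the end of the solid ray `R`. -/
def LimitEdgeVE (D : V → V → Prop) (v : V) (R : ℕ → V) : Prop :=
  ∀ (X : Finset V) C, IsSCCIn D ((↑X : Set V)ᶜ) C → HasTailIn R C → v ∉ C →
    ∃ b ∈ C, D v b

/-- Limit edge from the end of the solid ray `R` to the vertex `v`. -/
def LimitEdgeEV (D : V → V → Prop) (R : ℕ → V) (v : V) : Prop :=
  ∀ (X : Finset V) C, IsSCCIn D ((↑X : Set V)ᶜ) C → HasTailIn R C → v ∉ C →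
    ∃ a ∈ C, D a v

/-- A subdivided infinite out-star in `D` with centre `c`, given by its paths. -/
def IsStar (D : V → V → Prop) (c : V) (P : ℕ → List V) : Prop :=
  (∀ k, IsPathList D (P k)) ∧ (∀ k, (P k).head? = some c) ∧
  (∀ k, 2 ≤ (P k).length) ∧
  (∀ j k, j ≠ k → ∀ x ∈ (P j).tail, x ∉ (P k).tail)

/-- A directed comb in `D` with spine `R`, given by its (pairwise disjoint) paths each meeting
`R` precisely in its first vertex. -/
def IsComb (D : V → V → Prop) (R : ℕ → V) (P : ℕ → List V) : Prop :=
  IsRay D R ∧ (∀ k, IsPathList D (P k)) ∧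
  (∀ k, ∃ n, (P k).head? = some (R n)) ∧
  (∀ k, ∀ x ∈ (P k).tail, ∀ n, x ≠ R n) ∧
  (∀ j k, j ≠ k → ∀ x ∈ P j, x ∉ P k)

/-- A star in `D` whose `k`-th leaf is `a k`. -/
def StarAttachedWith (D : V → V → Prop) (a : ℕ → V) : Prop :=
  ∃ c P, IsStar D c P ∧ ∀ k, (P k).getLast? = some (a k)

/-- A comb in `D` whose `k`-th tooth is `a k`. -/
def CombAttachedWith (D : V → V → Prop) (a : ℕ → V) : Prop :=
  ∃ R P, IsComb D R P ∧ ∀ k, (P k).getLast? = some (a k)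

/-- `a` and `b` are consecutive entries of the list `l`. -/
def AdjInList (l : List V) (a b : V) : Prop :=
  ∃ l₁ l₂, l = l₁ ++ a :: b :: l₂

/-- The edge relation of (a subdigraph of `D` forming) the necklace `N`: all `D`-edges inside a
bead together with the edges of the connecting paths. -/
def Necklace.edges {D : V → V → Prop} (N : Necklace D) (a b : V) : Prop :=
  D a b ∧ ((∃ n, a ∈ N.bead n ∧ b ∈ N.bead n) ∨
    (∃ n, AdjInList (N.fwd n) a b ∨ AdjInList (N.bwd n) a b))

/-- A generalized ray: a directed ray (`true`) or a reverse directed ray (`false`). -/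
def IsGenRay (D : V → V → Prop) : Bool × (ℕ → V) → Prop
  | (true, R) => IsRay D R
  | (false, R) => IsRevRay D R

/-- Pre-end equivalence of generalized rays: infinitely many disjoint paths in both
directions. -/
def PreEquiv (D : V → V → Prop) (Q Q' : Bool × (ℕ → V)) : Prop :=
  DisjointPathsFrom D (Set.range Q.2) (Set.range Q'.2) ∧
  DisjointPathsFrom D (Set.range Q'.2) (Set.range Q.2)

/-- The pre-end `γ` includes the end represented by the solid ray `R`. -/
def IncludesEnd (D : V → V → Prop) (γ : Set (Bool × (ℕ → V))) (R : ℕ → V) : Prop :=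
  Solid D R ∧ ∀ R', Solid D R' → EndEquiv D R R' → (true, R') ∈ γ

/-- The set of edges of `D` from `A` to `B`. -/
def EdgesBetween (D : V → V → Prop) (A B : Set V) : Set (V × V) :=
  {e | D e.1 e.2 ∧ e.1 ∈ A ∧ e.2 ∈ B}

/-- A bundle of `D − X`. -/
def IsBundle (D : V → V → Prop) (X : Finset V) (E : Set (V × V)) : Prop :=
  E.Nonempty ∧
  ((∃ C C', IsSCCIn D ((↑X : Set V)ᶜ) C ∧ IsSCCIn D ((↑X : Set V)ᶜ) C' ∧ C ≠ C' ∧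
      E = EdgesBetween D C C') ∨
   (∃ v ∈ X, ∃ C, IsSCCIn D ((↑X : Set V)ᶜ) C ∧
      (E = EdgesBetween D {v} C ∨ E = EdgesBetween D C {v})))

/-- Compatibility `f(X) ⊇ f(Y)` between values of a direction (a strong component is regarded
as containing a bundle if it contains all its edges). -/
def DirCompat : Set V ⊕ Set (V × V) → Set V ⊕ Set (V × V) → Prop
  | Sum.inl C, Sum.inl C' => C' ⊆ C
  | Sum.inl C, Sum.inr E' => ∀ e ∈ E', e.1 ∈ C ∧ e.2 ∈ C
  | Sum.inr _, Sum.inl _ => False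
  | Sum.inr E, Sum.inr E' => E' ⊆ E

/-- A direction of `D`: maps each finite `X` to a strong component or a bundle of `D − X`,
compatibly. -/
def IsDirection (D : V → V → Prop) (f : Finset V → Set V ⊕ Set (V × V)) : Prop :=
  (∀ X : Finset V, (∃ C, IsSCCIn D ((↑X : Set V)ᶜ) C ∧ f X = Sum.inl C) ∨
    (∃ E, IsBundle D X E ∧ f X = Sum.inr E)) ∧
  ∀ X Y : Finset V, X ⊆ Y → DirCompat (f X) (f Y)

/-- An edge-direction: a direction whose value is a bundle for some finite `X`. -/
def IsEdgeDirection (D : V → V → Prop) (f : Finset V → Set V ⊕ Set (V × V)) : Prop :=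
  IsDirection D f ∧ ∃ (X : Finset V) (E : Set (V × V)), f X = Sum.inr E

/-- The three kinds of (potential) limit edges: end–end, vertex–end, end–vertex.
Ends are given as sets of (solid) rays. -/
inductive LimitEdgeObj (V : Type*) where
  | ee (Ω₁ Ω₂ : Set (ℕ → V))
  | ve (v : V) (Ω : Set (ℕ → V))
  | ev (Ω : Set (ℕ → V)) (v : V)

/-- `l` is a limit edge of `D`. -/
def IsLimitEdge (D : V → V → Prop) : LimitEdgeObj V → Prop
  | LimitEdgeObj.ee Ω₁ Ω₂ => IsEnd D Ω₁ ∧ IsEnd D Ω₂ ∧ Ω₁ ≠ Ω₂ ∧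
      ∀ R ∈ Ω₁, ∀ R' ∈ Ω₂, LimitEdgeEE D R R'
  | LimitEdgeObj.ve v Ω => IsEnd D Ω ∧ ∀ R ∈ Ω, LimitEdgeVE D v R
  | LimitEdgeObj.ev Ω v => IsEnd D Ω ∧ ∀ R ∈ Ω, LimitEdgeEV D R v

/-- `f` agrees with the map `f_λ` for the end–end limit edge `Ω₁Ω₂`. -/
def AgreesEE (D : V → V → Prop) (Ω₁ Ω₂ : Set (ℕ → V))
    (f : Finset V → Set V ⊕ Set (V × V)) : Prop :=
  ∀ (X : Finset V), ∀ R ∈ Ω₁, ∀ R' ∈ Ω₂, ∀ C C',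
    IsSCCIn D ((↑X : Set V)ᶜ) C → HasTailIn R C →
    IsSCCIn D ((↑X : Set V)ᶜ) C' → HasTailIn R' C' →
    (C = C' → f X = Sum.inl C) ∧ (C ≠ C' → f X = Sum.inr (EdgesBetween D C C'))

/-- `f` agrees with the map `f_λ` for the vertex–end limit edge `vΩ`. -/
def AgreesVE (D : V → V → Prop) (v : V) (Ω : Set (ℕ → V))
    (f : Finset V → Set V ⊕ Set (V × V)) : Prop :=
  ∀ (X : Finset V), ∀ R ∈ Ω, ∀ C, IsSCCIn D ((↑X : Set V)ᶜ) C → HasTailIn R C →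
    (v ∈ C → f X = Sum.inl C) ∧
    (v ∈ (↑X : Set V) → f X = Sum.inr (EdgesBetween D {v} C)) ∧
    (∀ C', IsSCCIn D ((↑X : Set V)ᶜ) C' → v ∈ C' → C' ≠ C →
      f X = Sum.inr (EdgesBetween D C' C))

/-- `f` agrees with the map `f_λ` for the end–vertex limit edge `Ωv`. -/
def AgreesEV (D : V → V → Prop) (Ω : Set (ℕ → V)) (v : V)
    (f : Finset V → Set V ⊕ Set (V × V)) : Prop :=
  ∀ (X : Finset V), ∀ R ∈ Ω, ∀ C, IsSCCIn D ((↑X : Set V)ᶜ) C → HasTailIn R C →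
    (v ∈ C → f X = Sum.inl C) ∧
    (v ∈ (↑X : Set V) → f X = Sum.inr (EdgesBetween D C {v})) ∧
    (∀ C', IsSCCIn D ((↑X : Set V)ᶜ) C' → v ∈ C' → C' ≠ C →
      f X = Sum.inr (EdgesBetween D C C'))

/-- `f` agrees with `f_λ` for the limit edge `l`. -/
def Agrees (D : V → V → Prop) : LimitEdgeObj V → (Finset V → Set V ⊕ Set (V × V)) → Prop
  | LimitEdgeObj.ee Ω₁ Ω₂, f => AgreesEE D Ω₁ Ω₂ f
  | LimitEdgeObj.ve v Ω, f => AgreesVE D v Ω f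
  | LimitEdgeObj.ev Ω v, f => AgreesEV D Ω v f


/-!
(i) ⇒ (ii): send `X` to the strong component of `D - X` containing a tail of the ray.

(ii) ⇒ (iii): given a vertex-direction `f` in the closure of `𝒰`, choose finite strongly
connected beads meeting every `U ∈ 𝒰`, one after the other: once a bead `K ⊆ f X` is chosen,
put `X' = X ∪ K`, so that `f X' ⊆ f X` avoids `K`, and join `K` to a new bead in `f X'` by paths
in both directions through the annulus `f X \ f X'`. Where these two paths cross, `K` swallows
the crossing part, so the remaining paths are internally disjoint. Since the sets `f Xₙ`
decrease, distinct annuli are disjoint, which separates all beads and paths of different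
steps.

(iii) ⇒ (i): every vertex lies in only finitely many beads and connecting paths, so for each
finite `X` all but finitely many of them avoid `X` and, being joined in both directions, lie in
one strong component of `D - X`; this component meets every `U ∈ 𝒰`. A ray threaded through
the beads along the forward paths has a tail in it, hence is solid.
-/

namespace List

variable {α : Type*} {p : α → Prop} {l : List α} {x : α}

theorem exists_eq_append_cons_first (h : ∃ x ∈ l, p x) :
    ∃ l₁ x l₂, l = l₁ ++ x :: l₂ ∧ p x ∧ ∀ y ∈ l₁, ¬ p y := by
  induction l with
  | nil => simp at h
  | cons a t ih =>
    by_cases ha : p a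
    · exact ⟨[], a, t, rfl, ha, by simp⟩
    obtain ⟨x, hx, hpx⟩ := h
    obtain ⟨l₁, y, l₂, rfl, hy, hl₁⟩ :=
      ih ⟨x, (mem_cons.1 hx).resolve_left (by rintro rfl; exact ha hpx), hpx⟩
    exact ⟨a :: l₁, y, l₂, rfl, hy, by simpa [ha] using hl₁⟩

theorem exists_eq_append_cons_last (h : ∃ x ∈ l, p x) :
    ∃ l₁ x l₂, l = l₁ ++ x :: l₂ ∧ p x ∧ ∀ y ∈ l₂, ¬ p y := by
  induction l with
  | nil => simp at h
  | cons a t ih =>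
    by_cases ht : ∃ x ∈ t, p x
    · obtain ⟨l₁, y, l₂, rfl, hy, hl₂⟩ := ih ht
      exact ⟨a :: l₁, y, l₂, rfl, hy, hl₂⟩
    · push Not at ht
      obtain ⟨x, hx, hpx⟩ := h
      rcases mem_cons.1 hx with rfl | hx
      · exact ⟨[], x, t, rfl, hpx, ht⟩
      · exact absurd hpx (ht x hx)

theorem mem_head?_or_mem_getLast?_or_mem_tail_dropLast (hx : x ∈ l) :
    x ∈ l.head? ∨ x ∈ l.getLast? ∨ x ∈ l.tail.dropLast := by
  obtain ⟨a, t, rfl⟩ := exists_cons_of_ne_nil (ne_nil_of_mem hx)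
  rcases mem_cons.1 hx with rfl | hx
  · simp
  have ht : t ≠ [] := ne_nil_of_mem hx
  rw [← dropLast_append_getLast ht, mem_append, mem_singleton] at hx
  rcases hx with hx | rfl
  · simp [hx]
  · simp [getLast?_eq_some_getLast (cons_ne_nil a t), getLast_cons ht]

theorem mem_tail_dropLast_iff :
    x ∈ l.tail.dropLast ↔ ∃ l₁ l₂, l = l₁ ++ x :: l₂ ∧ l₁ ≠ [] ∧ l₂ ≠ [] := by
  constructor
  · intro hx
    obtain ⟨a, t, rfl⟩ := exists_cons_of_ne_nil (l := l) (by rintro rfl; simp at hx)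
    have ht : t ≠ [] := by rintro rfl; simp at hx
    obtain ⟨u, v, huv⟩ := append_of_mem (by simpa using hx)
    refine ⟨a :: u, v ++ [t.getLast ht], ?_, by simp, by simp⟩
    conv_lhs => rw [← dropLast_append_getLast ht, huv]
    simp
  · rintro ⟨l₁, l₂, rfl, h₁, h₂⟩
    obtain ⟨a, l₁, rfl⟩ := exists_cons_of_ne_nil h₁
    have : a :: l₁ ++ x :: l₂ = a :: ((l₁ ++ x :: l₂.dropLast) ++ [l₂.getLast h₂]) := by
      simp [dropLast_append_getLast h₂]
    rw [this, tail_cons, dropLast_concat]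
    simp

theorem IsInfix.mem_tail_dropLast {m : List α} (h : m <:+: l) (hx : x ∈ m.tail.dropLast) :
    x ∈ l.tail.dropLast := by
  obtain ⟨s, t, rfl⟩ := h
  obtain ⟨m₁, m₂, rfl, h₁, h₂⟩ := mem_tail_dropLast_iff.1 hx
  exact mem_tail_dropLast_iff.2 ⟨s ++ m₁, m₂ ++ t, by simp, by simp [h₁], by simp [h₂]⟩

theorem mem_dropLast_of_mem_tail_dropLast (hx : x ∈ l.tail.dropLast) : x ∈ l.dropLast := by
  rw [← tail_dropLast] at hx
  exact mem_of_mem_tail hx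

theorem mem_tail_append_cons {l₁ l₂ : List α} {y : α} (hx : x ∈ l₂) :
    x ∈ (l₁ ++ y :: l₂).tail := by
  cases l₁ <;> simp [hx]

end List

section Reach

variable {D : V → V → Prop} {S T : Set V} {a b c : V}

theorem ReachIn.refl (ha : a ∈ S) : ReachIn D S a a := ⟨ha, ha, .refl⟩

theorem ReachIn.trans (hab : ReachIn D S a b) (hbc : ReachIn D S b c) : ReachIn D S a c :=
  ⟨hab.1, hbc.2.1, hab.2.2.trans hbc.2.2⟩

theorem ReachIn.mono (hST : S ⊆ T) (h : ReachIn D S a b) : ReachIn D T a b :=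
  ⟨hST h.1, hST h.2.1, Relation.ReflTransGen.mono (fun _ _ hxy => ⟨hST hxy.1, hxy.2⟩) _ _ h.2.2⟩

theorem reachIn_of_isChain {l : List V} (hl : l.IsChain D) (hS : ∀ x ∈ l, x ∈ S)
    (ha : a ∈ l.head?) (hb : b ∈ l.getLast?) : ReachIn D S a b := by
  have hne : l ≠ [] := by rintro rfl; simp at ha
  have hl' : l.IsChain fun x y => y ∈ S ∧ D x y :=
    hl.imp_of_mem_imp fun x y _ hy hxy => ⟨hS y hy, hxy⟩
  obtain rfl : l.head hne = a := by simpa [List.head?_eq_some_head hne] using ha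
  obtain rfl : l.getLast hne = b := by simpa [List.getLast?_eq_some_getLast hne] using hb
  exact ⟨hS _ (l.head_mem hne), hS _ (l.getLast_mem hne),
    List.relationReflTransGen_of_exists_isChain l hl' hne⟩

theorem reachIn_of_mem_isChain {l : List V} (hl : l.IsChain D) (hS : ∀ x ∈ l, x ∈ S)
    (ha : a ∈ l.head?) (hb : b ∈ l.getLast?) {x : V} (hx : x ∈ l) :
    ReachIn D S a x ∧ ReachIn D S x b := by
  obtain ⟨l₁, l₂, rfl⟩ := List.append_of_mem hx
  refine ⟨reachIn_of_isChain (l := l₁ ++ [x]) (hl.prefix ⟨l₂, by simp⟩) (fun y hy => hS y ?_) ?_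
      (by simp),
    reachIn_of_isChain (hl.suffix ⟨l₁, rfl⟩) (fun y hy => hS y (by simp [hy])) (by simp) ?_⟩
  · simp only [List.mem_append, List.mem_cons] at hy ⊢; tauto
  · cases l₁ <;> simpa using ha
  · simpa [List.getLast?_append] using hb

/-- Shortcutting a walk at a repeated vertex turns it into a path. -/
theorem ReachIn.exists_path (h : ReachIn D S a b) :
    ∃ l, IsPathList D l ∧ a ∈ l.head? ∧ b ∈ l.getLast? ∧ ∀ x ∈ l, x ∈ S := by
  obtain ⟨ha, hb, h⟩ := h
  revert ha
  induction h using Relation.ReflTransGen.head_induction_on with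
  | refl => exact fun _ => ⟨[b], ⟨by simp, by simp, .singleton b⟩, rfl, rfl, by simpa⟩
  | @head a c hac _ ih =>
    intro ha
    obtain ⟨l, ⟨hne, hnd, hch⟩, hc, hbl, hS⟩ := ih hac.1
    by_cases hal : a ∈ l
    · obtain ⟨l₁, l₂, rfl⟩ := List.append_of_mem hal
      refine ⟨a :: l₂, ⟨by simp, hnd.sublist (List.sublist_append_right _ _),
        List.IsChain.suffix hch ⟨l₁, rfl⟩⟩, rfl, by simpa [List.getLast?_append] using hbl,
        fun x hx => hS x (by simp_all)⟩
    · refine ⟨a :: l, ⟨by simp, List.nodup_cons.2 ⟨hal, hnd⟩,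
        List.IsChain.cons hch fun y hy => ?_⟩, rfl, ?_, ?_⟩
      · exact Option.mem_unique hc hy ▸ hac.2
      · simpa [List.getLast?_cons, List.getLast?_eq_some_getLast hne] using hbl
      · simpa [ha] using hS

end Reach

section Components

variable {D : V → V → Prop} {S T C C' : Set V} {a : V}

def sccOf (D : V → V → Prop) (S : Set V) (a : V) : Set V :=
  {b | ReachIn D S a b ∧ ReachIn D S b a}

theorem isSCCIn_sccOf (ha : a ∈ S) : IsSCCIn D S (sccOf D S a) := ⟨a, ha, rfl⟩

theorem mem_sccOf_self (ha : a ∈ S) : a ∈ sccOf D S a := ⟨.refl ha, .refl ha⟩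

theorem IsSCCIn.eq_sccOf (h : IsSCCIn D S C) (ha : a ∈ C) : C = sccOf D S a := by
  obtain ⟨r, -, rfl⟩ := h
  ext x
  exact ⟨fun hx => ⟨ha.2.trans hx.1, hx.2.trans ha.1⟩,
    fun hx => ⟨ha.1.trans hx.1, hx.2.trans ha.2⟩⟩

theorem IsSCCIn.subset (h : IsSCCIn D S C) : C ⊆ S := by
  obtain ⟨r, -, rfl⟩ := h
  exact fun x hx => hx.1.2.1

theorem IsSCCIn.nonempty (h : IsSCCIn D S C) : C.Nonempty := by
  obtain ⟨r, hr, rfl⟩ := h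
  exact ⟨r, mem_sccOf_self hr⟩

theorem IsSCCIn.subset_of_mem (hST : S ⊆ T) (h : IsSCCIn D S C) (h' : IsSCCIn D T C')
    (ha : a ∈ C) (ha' : a ∈ C') : C ⊆ C' := by
  rw [h.eq_sccOf ha, h'.eq_sccOf ha']
  exact fun x hx => ⟨hx.1.mono hST, hx.2.mono hST⟩

def IsStronglyConnectedIn (D : V → V → Prop) (B : Set V) : Prop :=
  ∀ a ∈ B, ∀ b ∈ B, ReachIn D B a b

/-- Every vertex on a path between two vertices of a strong component lies in the component. -/
theorem IsSCCIn.isStronglyConnectedIn (h : IsSCCIn D S C) : IsStronglyConnectedIn D C := by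
  intro a ha b hb
  rw [h.eq_sccOf ha] at hb ⊢
  obtain ⟨l, ⟨-, -, hl⟩, hal, hbl, hS⟩ := hb.1.exists_path
  refine reachIn_of_isChain hl (fun x hx => ?_) hal hbl
  have hx' := reachIn_of_mem_isChain hl hS hal hbl hx
  exact ⟨hx'.1, hx'.2.trans hb.2⟩

theorem IsStronglyConnectedIn.union {B W : Set V} (hB : IsStronglyConnectedIn D B)
    (hW : ∀ w ∈ W, (∃ z ∈ B, ReachIn D (B ∪ W) z w) ∧ ∃ z ∈ B, ReachIn D (B ∪ W) w z) :
    IsStronglyConnectedIn D (B ∪ W) := by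
  have hin : ∀ w ∈ B ∪ W, ∃ z ∈ B, ReachIn D (B ∪ W) z w := by
    rintro w (hw | hw)
    exacts [⟨w, hw, .refl (.inl hw)⟩, (hW w hw).1]
  have hout : ∀ w ∈ B ∪ W, ∃ z ∈ B, ReachIn D (B ∪ W) w z := by
    rintro w (hw | hw)
    exacts [⟨w, hw, .refl (.inl hw)⟩, (hW w hw).2]
  intro a ha b hb
  obtain ⟨z, hz, haz⟩ := hout a ha
  obtain ⟨z', hz', hzb⟩ := hin b hb
  exact haz.trans (((hB z hz z' hz').mono Set.subset_union_left).trans hzb)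

theorem IsStronglyConnectedIn.union_walk {B : Set V} (hB : IsStronglyConnectedIn D B)
    {l : List V} (hl : l.IsChain D) (hh : ∀ x ∈ l.head?, x ∈ B) (ht : ∀ x ∈ l.getLast?, x ∈ B) :
    IsStronglyConnectedIn D (B ∪ {x | x ∈ l}) := by
  refine hB.union fun w hw => ?_
  have hne := List.ne_nil_of_mem hw
  have ha := List.head?_eq_some_head hne
  have hb := List.getLast?_eq_some_getLast hne
  have := reachIn_of_mem_isChain (S := B ∪ {x | x ∈ l}) hl (fun x hx => .inr hx) ha hb hw
  exact ⟨⟨_, hh _ ha, this.1⟩, ⟨_, ht _ hb, this.2⟩⟩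

end Components

section Beads

variable {D : V → V → Prop} {𝒰 : Finset (Set V)} {S T A B C K : Set V} {a b : V}

def IsABPath (D : V → V → Prop) (A B : Set V) (l : List V) : Prop :=
  IsPathList D l ∧ (∀ x ∈ l.head?, x ∈ A) ∧ (∀ x ∈ l.getLast?, x ∈ B) ∧
    (∀ x ∈ l.tail, x ∉ A) ∧ ∀ x ∈ l.dropLast, x ∉ B

/-- The segment from the last visit of `A` to the next visit of `B`. -/
theorem IsPathList.exists_infix_isABPath {l : List V} (hl : IsPathList D l)
    (ha : ∀ x ∈ l.head?, x ∈ A) (hb : ∀ x ∈ l.getLast?, x ∈ B) :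
    ∃ m, m <:+: l ∧ IsABPath D A B m := by
  have hhead := List.head?_eq_some_head hl.1
  have hlast := List.getLast?_eq_some_getLast hl.1
  obtain ⟨l₁, x, l₂, rfl, hxA, hl₂⟩ :=
    List.exists_eq_append_cons_last ⟨_, List.head_mem hl.1, ha _ hhead⟩
  obtain ⟨m₁, y, m₂, hm, hyB, hm₁⟩ := List.exists_eq_append_cons_first (l := x :: l₂)
    ⟨_, List.mem_of_mem_getLast? (by simpa [List.getLast?_append] using hlast), hb _ hlast⟩
  have hm' : (m₁ ++ [y]) ++ m₂ = x :: l₂ := by simp [hm]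
  have hsuf : (m₁ ++ [y]) ++ m₂ <:+ l₁ ++ x :: l₂ := hm' ▸ List.suffix_append _ _
  have hinfix : m₁ ++ [y] <:+: l₁ ++ x :: l₂ :=
    (List.prefix_append _ _).isInfix.trans hsuf.isInfix
  refine ⟨m₁ ++ [y], hinfix, ⟨by simp, hl.2.1.sublist hinfix.sublist,
    List.IsChain.infix hl.2.2 hinfix⟩, fun z hz => ?_, by simpa using hyB, fun z hz => ?_,
    by simpa using hm₁⟩
  · rw [← List.head?_append_of_ne_nil _ (by simp : m₁ ++ [y] ≠ []) (l₂ := m₂), hm'] at hz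
    obtain rfl : x = z := by simpa using hz
    exact hxA
  · refine hl₂ z ?_
    have : z ∈ ((m₁ ++ [y]) ++ m₂).tail := by
      rw [List.tail_append_of_ne_nil (by simp)]; exact List.mem_append_left _ hz
    simpa [hm'] using this

theorem ReachIn.exists_isABPath (h : ReachIn D S a b) (ha : a ∈ A) (hb : b ∈ B) :
    ∃ l, IsABPath D A B l ∧ ∀ x ∈ l, x ∈ S := by
  obtain ⟨l, hl, hal, hbl, hS⟩ := h.exists_path
  obtain ⟨m, hm, hmAB⟩ := hl.exists_infix_isABPath (A := A) (B := B)
    (fun x hx => Option.mem_unique hal hx ▸ ha) (fun x hx => Option.mem_unique hbl hx ▸ hb)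
  exact ⟨m, hmAB, fun x hx => hS x (hm.subset hx)⟩

def IsBeadIn (D : V → V → Prop) (𝒰 : Finset (Set V)) (S K : Set V) : Prop :=
  K ⊆ S ∧ K.Finite ∧ K.Nonempty ∧ IsStronglyConnectedIn D K ∧ ∀ U ∈ 𝒰, (K ∩ U).Nonempty

/-- Add a closed walk through `x` and a vertex of `K`. -/
theorem IsBeadIn.exists_insert (hC : IsSCCIn D T C) (hK : IsBeadIn D 𝒰 C K) {x : V}
    (hx : x ∈ C) : ∃ K', K ⊆ K' ∧ x ∈ K' ∧ IsBeadIn D 𝒰 C K' := by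
  obtain ⟨hKC, hKfin, ⟨c, hc⟩, hKsc, hKU⟩ := hK
  obtain ⟨l₁, ⟨-, -, hl₁⟩, hc₁, hx₁, hl₁C⟩ :=
    (hC.isStronglyConnectedIn c (hKC hc) x hx).exists_path
  obtain ⟨l₂, ⟨-, -, hl₂⟩, hx₂, hc₂, hl₂C⟩ :=
    (hC.isStronglyConnectedIn x hx c (hKC hc)).exists_path
  set W : Set V := {y | y ∈ l₁ ∨ y ∈ l₂}
  have r₁ {y : V} (hy : y ∈ l₁) : ReachIn D (K ∪ W) c y ∧ ReachIn D (K ∪ W) y x :=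
    reachIn_of_mem_isChain hl₁ (fun y hy => .inr (.inl hy)) hc₁ hx₁ hy
  have r₂ {y : V} (hy : y ∈ l₂) : ReachIn D (K ∪ W) x y ∧ ReachIn D (K ∪ W) y c :=
    reachIn_of_mem_isChain hl₂ (fun y hy => .inr (.inr hy)) hx₂ hc₂ hy
  have hxl₁ : x ∈ l₁ := List.mem_of_mem_getLast? hx₁
  have hxl₂ : x ∈ l₂ := List.mem_of_mem_head? hx₂
  refine ⟨K ∪ W, Set.subset_union_left, .inr (.inl hxl₁), ?_, ?_, ⟨c, .inl hc⟩, ?_, ?_⟩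
  · rintro y (hy | hy | hy)
    exacts [hKC hy, hl₁C y hy, hl₂C y hy]
  · exact hKfin.union ((List.finite_toSet l₁).union (List.finite_toSet l₂))
  · refine hKsc.union fun w hw => ?_
    rcases hw with hw | hw
    · exact ⟨⟨c, hc, (r₁ hw).1⟩, ⟨c, hc, (r₁ hw).2.trans (r₂ hxl₂).2⟩⟩
    · exact ⟨⟨c, hc, (r₁ hxl₁).1.trans (r₂ hw).1⟩, ⟨c, hc, (r₂ hw).2⟩⟩
  · exact fun U hU => (hKU U hU).mono (Set.inter_subset_inter_left _ Set.subset_union_left)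

theorem IsSCCIn.exists_isBeadIn (hC : IsSCCIn D T C) (hU : ∀ U ∈ 𝒰, (C ∩ U).Nonempty) :
    ∃ K, IsBeadIn D 𝒰 C K := by
  classical
  induction 𝒰 using Finset.induction_on with
  | empty =>
    obtain ⟨c, hc⟩ := hC.nonempty
    refine ⟨{c}, by simpa using hc, Set.finite_singleton c, ⟨c, rfl⟩, ?_, by simp⟩
    rintro a rfl b rfl
    exact .refl rfl
  | insert U 𝒱 _ ih =>
    obtain ⟨K, hK⟩ := ih fun W hW => hU W (Finset.mem_insert_of_mem hW)
    obtain ⟨x, hxC, hxU⟩ := hU U (Finset.mem_insert_self U 𝒱)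
    obtain ⟨K', -, hxK', hK'C, hK'fin, hK'ne, hK'sc, hK'U⟩ := hK.exists_insert hC hxC
    refine ⟨K', hK'C, hK'fin, hK'ne, hK'sc, fun W hW => ?_⟩
    rcases Finset.mem_insert.1 hW with rfl | hW
    exacts [⟨x, hxK', hxU⟩, hK'U W hW]

end Beads

section Links

variable {D : V → V → Prop} {A A' B B' I I' K T : Set V}

def IsLink (D : V → V → Prop) (A B I : Set V) (l : List V) : Prop :=
  IsPathList D l ∧ (∀ x ∈ l.head?, x ∈ A) ∧ (∀ x ∈ l.getLast?, x ∈ B) ∧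
    ∀ x ∈ l.tail.dropLast, x ∈ I

theorem IsLink.mono {l : List V} (h : IsLink D A B I l) (hA : A ⊆ A') (hB : B ⊆ B')
    (hI : I ⊆ I') : IsLink D A' B' I' l :=
  ⟨h.1, fun x hx => hA (h.2.1 x hx), fun x hx => hB (h.2.2.1 x hx),
    fun x hx => hI (h.2.2.2 x hx)⟩

theorem IsABPath.not_mem_of_mem_tail_dropLast {l : List V} (h : IsABPath D A B l) {x : V}
    (hx : x ∈ l.tail.dropLast) : x ∉ A ∧ x ∉ B :=
  ⟨h.2.2.2.1 x (List.dropLast_subset _ hx), h.2.2.2.2 x (List.mem_dropLast_of_mem_tail_dropLast hx)⟩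

theorem IsStronglyConnectedIn.union_detour {p₁ p₂ q₁ q₂ : List V} {y : V}
    (hK : IsStronglyConnectedIn D K) (hKT : Disjoint K T) (hP : IsABPath D K T (p₁ ++ y :: p₂))
    (hQ : IsABPath D T K (q₁ ++ y :: q₂)) (hyT : y ∉ T) :
    IsStronglyConnectedIn D (K ∪ {x | x ∈ p₁ ++ y :: q₂}) ∧
      Disjoint (K ∪ {x | x ∈ p₁ ++ y :: q₂}) T := by
  have hwalk : (p₁ ++ y :: q₂).IsChain D := by
    have h₁ : (p₁ ++ [y]).IsChain D := hP.1.2.2.prefix ⟨p₂, by simp⟩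
    have h₂ : ([y] ++ q₂).IsChain D := hQ.1.2.2.suffix ⟨q₁, by simp⟩
    simpa using h₁.append_overlap h₂ (by simp)
  refine ⟨hK.union_walk hwalk (fun x hx => hP.2.1 x ?_) fun x hx => hQ.2.2.1 x (by simpa using hx),
    Set.disjoint_left.2 fun x hx hxT => ?_⟩
  · cases p₁ <;> simpa using hx
  rcases hx with hx | hx
  · exact Set.disjoint_left.1 hKT hx hxT
  rcases List.mem_append.1 hx with hx | hx
  · exact hP.2.2.2.2 x (by simp [hx]) hxT
  rcases List.mem_cons.1 hx with rfl | hx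
  · exact hyT hxT
  · exact hQ.2.2.2.1 x (List.mem_tail_append_cons hx) hxT

/-- The bead absorbs `p₁ ++ y :: p₂` up to `y`, its last vertex inner to `Q`, and `Q` from `y`
on; what is left of the two paths is then internally disjoint. -/
theorem exists_bead_links_of_split {p₁ p₂ Q : List V} {y : V}
    (hK : IsStronglyConnectedIn D K) (hKfin : K.Finite) (hKT : Disjoint K T)
    (hP : IsABPath D K T (p₁ ++ y :: p₂)) (hQ : IsABPath D T K Q) (hyQ : y ∈ Q.tail.dropLast)
    (hp₂ : ∀ z ∈ p₂, z ∉ Q.tail.dropLast) :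
    ∃ B fw bw, K ⊆ B ∧ B.Finite ∧ IsStronglyConnectedIn D B ∧ Disjoint B T ∧
      (∀ x ∈ B, x ∈ K ∨ x ∈ p₁ ++ y :: p₂ ∨ x ∈ Q) ∧
      IsLink D B {x | x ∈ (p₁ ++ y :: p₂).getLast?} ({x | x ∈ p₁ ++ y :: p₂} \ (B ∪ T)) fw ∧
      IsLink D {x | x ∈ Q.head?} B ({x | x ∈ Q} \ (B ∪ T)) bw ∧
      ∀ x ∈ fw.tail.dropLast, x ∉ bw.tail.dropLast := by
  obtain ⟨q₁, q₂, rfl⟩ := List.append_of_mem (List.mem_of_mem_tail (List.dropLast_subset _ hyQ))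
  set B := K ∪ {x | x ∈ p₁ ++ y :: q₂}
  obtain ⟨hBsc, hBT⟩ := hK.union_detour hKT hP hQ (hQ.not_mem_of_mem_tail_dropLast hyQ).1
  have hp₂B (x : V) (hx : x ∈ p₂) (hxP : x ∈ (p₁ ++ y :: p₂).tail.dropLast) : x ∉ B := by
    rintro (hxK | hxB)
    · exact (hP.not_mem_of_mem_tail_dropLast hxP).1 hxK
    have hnd := hP.1.2.1
    simp only [List.nodup_append, List.nodup_cons] at hnd
    rcases List.mem_append.1 hxB with hxB | hxB
    · exact hnd.2.2 x hxB x (.tail _ hx) rfl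
    rcases List.mem_cons.1 hxB with rfl | hxB
    · exact hnd.2.1.1 hx
    rcases List.mem_head?_or_mem_getLast?_or_mem_tail_dropLast
      (List.mem_append_right q₁ (.tail y hxB)) with h | h | h
    · exact (hP.not_mem_of_mem_tail_dropLast hxP).2 (hQ.2.1 x h)
    · exact (hP.not_mem_of_mem_tail_dropLast hxP).1 (hQ.2.2.1 x h)
    · exact hp₂ x hx h
  obtain ⟨bw, hbwQ, hbw⟩ := hQ.1.exists_infix_isABPath (A := {x | x ∈ (q₁ ++ y :: q₂).head?})
    (B := B) (fun x hx => hx) (fun x hx => .inl (hQ.2.2.1 x hx))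
  refine ⟨B, y :: p₂, bw, Set.subset_union_left, hKfin.union (List.finite_toSet _), hBsc, hBT,
    ?_, ⟨⟨by simp, hP.1.2.1.sublist (by simp), hP.1.2.2.suffix ⟨p₁, rfl⟩⟩,
      fun x hx => Option.mem_unique rfl hx ▸ .inr (by simp), fun x hx => by simpa using hx,
      fun x hx => ?_⟩, ⟨hbw.1, hbw.2.1, hbw.2.2.1, fun x hx => ?_⟩, fun x hx hx' => ?_⟩
  · rintro x (hx | hx)
    · exact .inl hx
    rcases List.mem_append.1 hx with hx | hx
    · exact .inr (.inl (by simp [hx]))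
    rcases List.mem_cons.1 hx with rfl | hx
    exacts [.inr (.inl (by simp)), .inr (.inr (by simp [hx]))]
  · have hxP := (List.suffix_append p₁ (y :: p₂)).isInfix.mem_tail_dropLast hx
    refine ⟨List.mem_of_mem_tail (List.dropLast_subset _ hxP), ?_⟩
    rintro (hxB | hxT)
    · exact hp₂B x (List.dropLast_subset _ (by simpa using hx)) hxP hxB
    · exact (hP.not_mem_of_mem_tail_dropLast hxP).2 hxT
  · have hxQ := hbwQ.mem_tail_dropLast hx
    refine ⟨List.mem_of_mem_tail (List.dropLast_subset _ hxQ), ?_⟩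
    rintro (hxB | hxT)
    · exact hbw.2.2.2.2 x (List.mem_dropLast_of_mem_tail_dropLast hx) hxB
    · exact (hQ.not_mem_of_mem_tail_dropLast hxQ).1 hxT
  · exact hp₂ x (List.dropLast_subset _ (by simpa using hx)) (hbwQ.mem_tail_dropLast hx')

theorem exists_bead_links {P Q : List V} (hK : IsStronglyConnectedIn D K) (hKfin : K.Finite)
    (hKT : Disjoint K T) (hP : IsABPath D K T P) (hQ : IsABPath D T K Q) :
    ∃ B fw bw, K ⊆ B ∧ B.Finite ∧ IsStronglyConnectedIn D B ∧ Disjoint B T ∧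
      (∀ x ∈ B, x ∈ K ∨ x ∈ P ∨ x ∈ Q) ∧
      IsLink D B {x | x ∈ P.getLast?} ({x | x ∈ P} \ (B ∪ T)) fw ∧
      IsLink D {x | x ∈ Q.head?} B ({x | x ∈ Q} \ (B ∪ T)) bw ∧
      ∀ x ∈ fw.tail.dropLast, x ∉ bw.tail.dropLast := by
  by_cases hmeet : ∃ y ∈ P, y ∈ Q.tail.dropLast
  · obtain ⟨p₁, y, p₂, rfl, hyQ, hp₂⟩ := List.exists_eq_append_cons_last hmeet
    exact exists_bead_links_of_split hK hKfin hKT hP hQ hyQ hp₂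
  push Not at hmeet
  have mem {l : List V} {x : V} (hx : x ∈ l.tail.dropLast) : x ∈ l :=
    List.mem_of_mem_tail (List.dropLast_subset _ hx)
  refine ⟨K, P, Q, subset_rfl, hKfin, hK, hKT, fun x hx => .inl hx,
    ⟨hP.1, hP.2.1, fun x hx => hx, fun x hx => ⟨mem hx, ?_⟩⟩,
    ⟨hQ.1, fun x hx => hx, hQ.2.2.1, fun x hx => ⟨mem hx, ?_⟩⟩, fun x hx => hmeet x (mem hx)⟩
  · rintro (h | h)
    exacts [(hP.not_mem_of_mem_tail_dropLast hx).1 h, (hP.not_mem_of_mem_tail_dropLast hx).2 h]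
  · rintro (h | h)
    exacts [(hQ.not_mem_of_mem_tail_dropLast hx).2 h, (hQ.not_mem_of_mem_tail_dropLast hx).1 h]

end Links

theorem Antitone.pairwise_disjoint_sdiff_succ {α : Type*} {F : ℕ → Set α} (hF : Antitone F) :
    Pairwise fun m n => Disjoint (F m \ F (m + 1)) (F n \ F (n + 1)) := by
  intro m n hmn
  wlog h : m < n generalizing m n
  · exact (this hmn.symm (lt_of_le_of_ne (not_lt.1 h) hmn.symm)).symm
  exact Set.disjoint_left.2 fun x hxm hxn => hxm.2 (hF (Nat.succ_le_of_lt h) hxn.1)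

section Directions

variable {D : V → V → Prop} {𝒰 : Finset (Set V)} {f : Finset V → Set V}

/-- The annuli `F n \ F (n + 1)` of a decreasing sequence separate the beads and links placed
inside them. -/
theorem exists_attached_necklace_of_annuli {F : ℕ → Set V} (hF : Antitone F)
    {B : ℕ → Set V} {fw bw : ℕ → List V} (hB : ∀ n, IsBeadIn D 𝒰 (F n \ F (n + 1)) (B n))
    (hfw : ∀ n, IsLink D (B n) (B (n + 1)) ((F n \ F (n + 1)) \ B n) (fw n))
    (hbw : ∀ n, IsLink D (B (n + 1)) (B n) ((F n \ F (n + 1)) \ B n) (bw n))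
    (hdisj : ∀ n, ∀ x ∈ (fw n).tail.dropLast, x ∉ (bw n).tail.dropLast) :
    ∃ N : Necklace D, N.AttachedTo 𝒰 := by
  have hann := hF.pairwise_disjoint_sdiff_succ
  have hsep {m n : ℕ} (hmn : m ≠ n) {x : V} (hm : x ∈ F m \ F (m + 1))
      (hn : x ∈ F n \ F (n + 1)) : False := Set.disjoint_left.1 (hann hmn) hm hn
  have hinner (n : ℕ) {x : V} (hx : x ∈ (F n \ F (n + 1)) \ B n) (m : ℕ) : x ∉ B m := by
    intro hxm
    by_cases hmn : m = n
    · exact hx.2 (hmn ▸ hxm)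
    · exact hsep hmn ((hB m).1 hxm) hx.1
  refine ⟨⟨B, fw, bw, fun n => (hB n).2.1, fun n => (hB n).2.2.1,
    fun m n hmn => Set.disjoint_left.2 fun x hm hn => hsep hmn ((hB m).1 hm) ((hB n).1 hn),
    fun n => (hB n).2.2.2.1, fun n => (hfw n).1, fun n => (hbw n).1,
    fun n => (hfw n).2.1, fun n => (hfw n).2.2.1, fun n => (hbw n).2.1, fun n => (hbw n).2.2.1,
    fun n x hx => hinner n ((hfw n).2.2.2 x hx), fun n x hx => hinner n ((hbw n).2.2.2 x hx),
    fun m n hmn x hm hn => hsep hmn ((hfw m).2.2.2 x hm).1 ((hfw n).2.2.2 x hn).1,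
    fun m n hmn x hm hn => hsep hmn ((hbw m).2.2.2 x hm).1 ((hbw n).2.2.2 x hn).1,
    fun m n x hm hn => ?_⟩, ?_⟩
  · by_cases hmn : m = n
    · exact hdisj m x hm (hmn ▸ hn)
    · exact hsep hmn ((hfw m).2.2.2 x hm).1 ((hbw n).2.2.2 x hn).1
  · exact Set.infinite_univ.mono fun n _ U hU => (hB n).2.2.2.2 U hU

theorem IsVertexDirection.exists_next_bead (hf : IsVertexDirection D f)
    (hcl : ∀ X : Finset V, ∀ U ∈ 𝒰, (f X ∩ U).Nonempty) {X : Finset V} {K : Set V}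
    (hK : IsBeadIn D 𝒰 (f X) K) :
    ∃ X' K' B fw bw, X ⊆ X' ∧ IsBeadIn D 𝒰 (f X') K' ∧ K ⊆ B ∧
      IsBeadIn D 𝒰 (f X \ f X') B ∧ IsLink D B K' ((f X \ f X') \ B) fw ∧
      IsLink D K' B ((f X \ f X') \ B) bw ∧ ∀ x ∈ fw.tail.dropLast, x ∉ bw.tail.dropLast := by
  classical
  obtain ⟨hKS, hKfin, ⟨c, hc⟩, hKsc, hKU⟩ := hK
  set X' := X ∪ hKfin.toFinset
  have hXX' : X ⊆ X' := Finset.subset_union_left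
  have hfX' : f X' ⊆ f X := hf.2 X X' hXX'
  have hKT : Disjoint K (f X') :=
    Set.disjoint_right.2 fun x hx hxK => (hf.1 X').subset hx (by simp [X', hxK])
  obtain ⟨c', hc'⟩ := (hf.1 X').nonempty
  have hSC := (hf.1 X).isStronglyConnectedIn
  obtain ⟨P, hP, hPS⟩ := (hSC c (hKS hc) c' (hfX' hc')).exists_isABPath hc hc'
  obtain ⟨Q, hQ, hQS⟩ := (hSC c' (hfX' hc') c (hKS hc)).exists_isABPath hc' hc
  obtain ⟨B, fw, bw, hKB, hBfin, hBsc, hBT, hBmem, hfw, hbw, hdisj⟩ :=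
    exists_bead_links hKsc hKfin hKT hP hQ
  obtain ⟨u, hu⟩ : ∃ u, u ∈ P.getLast? := ⟨_, List.getLast?_eq_some_getLast hP.1.1⟩
  obtain ⟨v, hv⟩ : ∃ v, v ∈ Q.head? := ⟨_, List.head?_eq_some_head hQ.1.1⟩
  obtain ⟨K₀, hK₀⟩ := (hf.1 X').exists_isBeadIn (hcl X')
  obtain ⟨K₁, -, huK₁, hK₁⟩ := hK₀.exists_insert (hf.1 X') (hP.2.2.1 u hu)
  obtain ⟨K', hK₁K', hvK', hK'⟩ := hK₁.exists_insert (hf.1 X') (hQ.2.1 v hv)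
  have hBS : B ⊆ f X := fun x hx => by
    rcases hBmem x hx with h | h | h
    exacts [hKS h, hPS x h, hQS x h]
  refine ⟨X', K', B, fw, bw, hXX', hK', hKB,
    ⟨fun x hx => ⟨hBS hx, Set.disjoint_left.1 hBT hx⟩, hBfin, ⟨c, hKB hc⟩, hBsc,
      fun U hU => (hKU U hU).mono (Set.inter_subset_inter_left _ hKB)⟩,
    hfw.mono subset_rfl (fun x hx => Option.mem_unique hu hx ▸ hK₁K' huK₁) ?_,
    hbw.mono (fun x hx => Option.mem_unique hv hx ▸ hvK') subset_rfl ?_, hdisj⟩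
  · rintro x ⟨hxP, hx⟩
    exact ⟨⟨hPS x hxP, fun h => hx (.inr h)⟩, fun h => hx (.inl h)⟩
  · rintro x ⟨hxQ, hx⟩
    exact ⟨⟨hQS x hxQ, fun h => hx (.inr h)⟩, fun h => hx (.inl h)⟩

theorem IsVertexDirection.exists_attached_necklace (hf : IsVertexDirection D f)
    (hcl : ∀ X : Finset V, ∀ U ∈ 𝒰, (f X ∩ U).Nonempty) :
    ∃ N : Necklace D, N.AttachedTo 𝒰 := by
  let Stage := {p : Finset V × Set V // IsBeadIn D 𝒰 (f p.1) p.2}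
  have step (s : Stage) : ∃ t : Stage, ∃ B fw bw, s.1.1 ⊆ t.1.1 ∧ s.1.2 ⊆ B ∧
      IsBeadIn D 𝒰 (f s.1.1 \ f t.1.1) B ∧ IsLink D B t.1.2 ((f s.1.1 \ f t.1.1) \ B) fw ∧
      IsLink D t.1.2 B ((f s.1.1 \ f t.1.1) \ B) bw ∧
      ∀ x ∈ fw.tail.dropLast, x ∉ bw.tail.dropLast := by
    obtain ⟨X', K', B, fw, bw, h⟩ := hf.exists_next_bead hcl s.2
    exact ⟨⟨(X', K'), h.2.1⟩, B, fw, bw, h.1, h.2.2⟩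
  choose next B fw bw hX hKB hB hfw hbw hdisj using step
  obtain ⟨K₀, hK₀⟩ := (hf.1 ∅).exists_isBeadIn (hcl ∅)
  let s : ℕ → Stage := fun n => n.rec ⟨(∅, K₀), hK₀⟩ fun _ => next
  exact exists_attached_necklace_of_annuli (F := fun n => f (s n).1.1)
    (antitone_nat_of_succ_le fun n => hf.2 _ _ (hX (s n))) (fun n => hB (s n))
    (fun n => (hfw (s n)).mono subset_rfl (hKB _) subset_rfl)
    (fun n => (hbw (s n)).mono (hKB _) subset_rfl subset_rfl) fun n => hdisj (s n)

end Directions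

section Rays

variable {D : V → V → Prop}

theorem exists_isRay_of_prefixes (W : ℕ → List V) (hW : ∀ {m n}, m ≤ n → W m <+: W n)
    (hlen : ∀ n, n ≤ (W n).length) (hch : ∀ n, (W n).IsChain D) (hnd : ∀ n, (W n).Nodup) :
    ∃ R, IsRay D R ∧ ∀ {n k} (hk : k < (W n).length), R k = (W n)[k] := by
  let R : ℕ → V := fun k => (W (k + 1))[k]'(by have := hlen (k + 1); omega)
  have hR {n k : ℕ} (hk : k < (W n).length) : R k = (W n)[k] := by
    rcases le_total (k + 1) n with h | h
    · exact (hW h).getElem _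
    · exact ((hW h).getElem hk).symm
  refine ⟨R, ⟨fun i j hij => ?_, fun k => ?_⟩, hR⟩
  · have := hlen (i + j + 1)
    rw [hR (n := i + j + 1) (by omega), hR (n := i + j + 1) (by omega)] at hij
    exact (hnd _).getElem_inj_iff.1 hij
  · have hk : k + 1 < (W (k + 2)).length := by have := hlen (k + 2); omega
    rw [hR (Nat.lt_of_succ_lt hk), hR hk]
    exact List.isChain_iff_getElem.1 (hch _) k hk

theorem exists_isRay_of_blocks (B : ℕ → List V) (hne : ∀ n, B n ≠ [])
    (hch : ∀ n, (B n).IsChain D) (hnd : ∀ n, (B n).Nodup)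
    (hdisj : Pairwise fun m n => (B m).Disjoint (B n))
    (hlink : ∀ n, ∀ x ∈ (B n).getLast?, ∀ y ∈ (B (n + 1)).head?, D x y) :
    ∃ R, IsRay D R ∧ ∀ n, ∃ k, ∀ j ≥ k, ∃ m ≥ n, R j ∈ B m := by
  let W : ℕ → List V := fun n => ((List.range n).map B).flatten
  have hW_succ (n : ℕ) : W (n + 1) = W n ++ B n := by simp [W, List.range_succ]
  have hW_len (n : ℕ) : n ≤ (W n).length := by
    induction n with
    | zero => simp
    | succ n ih => have := List.length_pos_iff.2 (hne n); rw [hW_succ, List.length_append]; omega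
  have hW {m n : ℕ} (h : m ≤ n) : W m <+: W n := by
    induction n, h using Nat.le_induction with
    | base => exact List.prefix_refl _
    | succ n _ ih => exact ih.trans ⟨B n, (hW_succ n).symm⟩
  have hW_nil (n : ℕ) : [] ∉ (List.range n).map B := by
    simpa using fun m _ => (hne m).symm
  obtain ⟨R, hR, hRW⟩ := exists_isRay_of_prefixes W hW hW_len
    (fun n => (List.isChain_flatten (hW_nil n)).2 ⟨by simpa using fun m _ => hch m,
      (List.isChain_map B).2 ((List.isChain_range _ _).2 fun m _ => hlink m)⟩)
    (fun n => List.nodup_flatten.2 ⟨by simpa using fun m _ => hnd m,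
      List.pairwise_map.2 (List.nodup_range.pairwise_of_forall_ne fun a _ b _ hab => hdisj hab)⟩)
  refine ⟨R, hR, fun n => ⟨(W n).length, fun j hj => ?_⟩⟩
  have hj' : j < (W (j + 1)).length := by have := hW_len (j + 1); omega
  obtain ⟨m, hm, hjm⟩ : ∃ m < j + 1, R j ∈ B m := by
    have := List.getElem_mem hj'
    rw [← hRW hj'] at this
    simpa [W] using this
  refine ⟨m, not_lt.1 fun hmn => ?_, hjm⟩
  obtain ⟨i, hi, hij⟩ := List.getElem_of_mem (l := W n) (by simpa [W] using ⟨m, hmn, hjm⟩)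
  rw [← hRW hi] at hij
  exact absurd (hR.1 hij) (by omega)

end Rays

namespace Necklace

variable {D : V → V → Prop} (N : Necklace D)

noncomputable def entry : ℕ → V
  | 0 => (N.bead_nonempty 0).some
  | n + 1 => (N.fwd n).getLast (N.fwd_path n).1

theorem entry_mem_bead : ∀ n, N.entry n ∈ N.bead n
  | 0 => (N.bead_nonempty 0).some_mem
  | n + 1 => N.fwd_last n _ (List.getLast?_eq_some_getLast _)

theorem exists_block (n : ℕ) :
    ∃ b : List V, b ≠ [] ∧ b.Nodup ∧ (b ++ [N.entry (n + 1)]).IsChain D ∧ N.entry n ∈ b.head? ∧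
      ∀ x ∈ b, x ∈ N.bead n ∨ x ∈ (N.fwd n).tail.dropLast := by
  have hfne := (N.fwd_path n).1
  have hreach : ReachIn D (N.bead n ∪ {x | x ∈ N.fwd n}) (N.entry n) (N.entry (n + 1)) :=
    ((N.bead_strong n _ (N.entry_mem_bead n) _
      (N.fwd_head n _ (List.head?_eq_some_head hfne))).mono Set.subset_union_left).trans
      (reachIn_of_isChain (N.fwd_path n).2.2 (fun x hx => .inr hx)
        (List.head?_eq_some_head hfne) (List.getLast?_eq_some_getLast hfne))
  obtain ⟨l, ⟨hne, hnd, hch⟩, hhead, hlast, hS⟩ := hreach.exists_path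
  have hl : l.dropLast ++ [N.entry (n + 1)] = l := by
    rw [← List.dropLast_append_getLast hne]
    simp [Option.some_inj.1 ((List.getLast?_eq_some_getLast hne).symm.trans hlast)]
  have hbne : l.dropLast ≠ [] := by
    intro h
    rw [h, List.nil_append] at hl
    rw [← hl] at hhead
    exact Set.disjoint_left.1 (N.bead_disj n (n + 1) (by omega)) (N.entry_mem_bead n)
      (Option.some_inj.1 hhead ▸ N.entry_mem_bead (n + 1))
  rw [← hl] at hnd hch hhead hS
  refine ⟨l.dropLast, hbne, hnd.sublist (List.sublist_append_left _ _), hch, ?_, fun x hx => ?_⟩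
  · rwa [List.head?_append_of_ne_nil _ hbne] at hhead
  have hxe : x ≠ N.entry (n + 1) := fun h =>
    (List.nodup_append.1 hnd).2.2 x hx _ (List.mem_singleton_self _) h
  rcases hS x (List.mem_append_left _ hx) with hx | hx
  · exact .inl hx
  rcases List.mem_head?_or_mem_getLast?_or_mem_tail_dropLast hx with h | h | h
  · exact .inl (N.fwd_head n x h)
  · exact absurd (Option.some_inj.1 ((List.getLast?_eq_some_getLast hfne).symm.trans h)).symm hxe
  · exact .inr h

theorem exists_isRay :
    ∃ R, IsRay D R ∧ ∀ n, ∃ k, ∀ j ≥ k, ∃ m ≥ n, R j ∈ N.bead m ∪ {x | x ∈ N.fwd m} := by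
  choose b hne hnd hch hhead hmem using N.exists_block
  have hdisj : Pairwise fun m n => (b m).Disjoint (b n) := by
    intro m n hmn x hxm hxn
    rcases hmem m x hxm with h₁ | h₁ <;> rcases hmem n x hxn with h₂ | h₂
    · exact Set.disjoint_left.1 (N.bead_disj m n hmn) h₁ h₂
    · exact N.fwd_inner n x h₂ m h₁
    · exact N.fwd_inner m x h₁ n h₂
    · exact N.fwd_fwd_disj m n hmn x h₁ h₂
  have hlink (n : ℕ) : ∀ x ∈ (b n).getLast?, ∀ y ∈ (b (n + 1)).head?, D x y := by
    intro x hx y hy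
    obtain rfl := Option.mem_unique hy (hhead (n + 1))
    exact (List.isChain_append.1 (hch n)).2.2 x hx _ rfl
  obtain ⟨R, hR, htail⟩ := exists_isRay_of_blocks b hne
    (fun n => (hch n).left_of_append) hnd hdisj hlink
  refine ⟨R, hR, fun n => (htail n).imp fun k hk j hj => ?_⟩
  obtain ⟨m, hm, hjm⟩ := hk j hj
  refine ⟨m, hm, ?_⟩
  rcases hmem m _ hjm with h | h
  exacts [.inl h, .inr (List.mem_of_mem_tail (List.dropLast_subset _ h))]


theorem finite_setOf_mem (x : V) :
    {n | x ∈ N.bead n ∨ x ∈ N.fwd n ∨ x ∈ N.bwd n}.Finite := by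
  have hsub : {n | x ∈ N.bead n ∨ x ∈ N.fwd n ∨ x ∈ N.bwd n} ⊆
      {n | x ∈ N.bead n} ∪ {n | x ∈ N.bead (n + 1)} ∪
        {n | x ∈ (N.fwd n).tail.dropLast} ∪ {n | x ∈ (N.bwd n).tail.dropLast} := by
    rintro n (h | h | h)
    · exact .inl (.inl (.inl h))
    · rcases List.mem_head?_or_mem_getLast?_or_mem_tail_dropLast h with h | h | h
      exacts [.inl (.inl (.inl (N.fwd_head n x h))), .inl (.inl (.inr (N.fwd_last n x h))),
        .inl (.inr h)]
    · rcases List.mem_head?_or_mem_getLast?_or_mem_tail_dropLast h with h | h | h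
      exacts [.inl (.inl (.inr (N.bwd_head n x h))), .inl (.inl (.inl (N.bwd_last n x h))),
        .inr h]
  refine Set.Finite.subset (((Set.Subsingleton.finite ?_).union (Set.Subsingleton.finite ?_)).union
    (Set.Subsingleton.finite ?_) |>.union (Set.Subsingleton.finite ?_)) hsub
  · exact fun m hm n hn => by_contra fun h => Set.disjoint_left.1 (N.bead_disj m n h) hm hn
  · exact fun m hm n hn => by_contra fun h =>
      Set.disjoint_left.1 (N.bead_disj (m + 1) (n + 1) (by omega)) hm hn
  · exact fun m hm n hn => by_contra fun h => N.fwd_fwd_disj m n h x hm hn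
  · exact fun m hm n hn => by_contra fun h => N.bwd_bwd_disj m n h x hm hn

theorem eventually_avoids (X : Finset V) :
    ∃ n₀, ∀ n ≥ n₀, N.bead n ∪ {x | x ∈ N.fwd n} ∪ {x | x ∈ N.bwd n} ⊆ (↑X : Set V)ᶜ := by
  obtain ⟨b, hb⟩ := (X.finite_toSet.biUnion fun x _ => N.finite_setOf_mem x).bddAbove
  refine ⟨b + 1, fun n hn x hx hxX => ?_⟩
  have : n ≤ b := hb (Set.mem_biUnion hxX (by rcases hx with (h | h) | h <;> simp_all))
  omega

/-- Following `fwd` and `bwd`, all beads from `n₀` on are strongly connected to each other. -/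
theorem exists_isSCCIn_of_tail_subset {S : Set V} {n₀ : ℕ}
    (hS : ∀ n ≥ n₀, N.bead n ∪ {x | x ∈ N.fwd n} ∪ {x | x ∈ N.bwd n} ⊆ S) :
    ∃ C, IsSCCIn D S C ∧ ∀ n ≥ n₀, N.bead n ∪ {x | x ∈ N.fwd n} ⊆ C := by
  obtain ⟨a, ha⟩ := N.bead_nonempty n₀
  have hbead {n : ℕ} (hn : n₀ ≤ n) {x y : V} (hx : x ∈ N.bead n) (hy : y ∈ N.bead n) :
      ReachIn D S x y :=
    (N.bead_strong n x hx y hy).mono fun z hz => hS n hn (.inl (.inl hz))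
  have hpath {l : List V} (hl : IsPathList D l) (hlS : ∀ x ∈ l, x ∈ S) :
      ∀ x ∈ l, ReachIn D S (l.head hl.1) x ∧ ReachIn D S x (l.getLast hl.1) :=
    fun x => reachIn_of_mem_isChain hl.2.2 hlS (List.head?_eq_some_head hl.1)
      (List.getLast?_eq_some_getLast hl.1)
  have hbeads : ∀ n ≥ n₀, N.bead n ⊆ sccOf D S a := by
    intro n hn
    induction n, hn using Nat.le_induction with
    | base => exact fun y hy => ⟨hbead le_rfl ha hy, hbead le_rfl hy ha⟩
    | succ n hn ih =>
      intro y hy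
      have hf := hpath (N.fwd_path n) fun x hx => hS n hn (.inl (.inr hx))
      have hb := hpath (N.bwd_path n) fun x hx => hS n hn (.inr hx)
      have hfh := ih (N.fwd_head n _ (List.head?_eq_some_head (N.fwd_path n).1))
      have hfl := N.fwd_last n _ (List.getLast?_eq_some_getLast (N.fwd_path n).1)
      have hbh := N.bwd_head n _ (List.head?_eq_some_head (N.bwd_path n).1)
      have hbl := ih (N.bwd_last n _ (List.getLast?_eq_some_getLast (N.bwd_path n).1))
      exact ⟨hfh.1.trans ((hf _ (List.getLast_mem _)).1.trans (hbead (by omega) hfl hy)),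
        (hbead (by omega) hy hbh).trans ((hb _ (List.head_mem _)).2.trans hbl.2)⟩
  refine ⟨sccOf D S a, isSCCIn_sccOf (hS n₀ le_rfl (.inl (.inl ha))), fun n hn => ?_⟩
  rintro x (hx | hx)
  · exact hbeads n hn hx
  have hf := hpath (N.fwd_path n) fun x hx => hS n hn (.inl (.inr hx))
  have hfh := hbeads n hn (N.fwd_head n _ (List.head?_eq_some_head (N.fwd_path n).1))
  have hfl := hbeads (n + 1) (by omega)
    (N.fwd_last n _ (List.getLast?_eq_some_getLast (N.fwd_path n).1))
  exact ⟨hfh.1.trans (hf x hx).1, (hf x hx).2.trans hfl.2⟩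

theorem exists_end_in_closure {𝒰 : Finset (Set V)} (hatt : N.AttachedTo 𝒰) :
    ∃ R, Solid D R ∧ ∀ X : Finset V, ∃ C, IsSCCIn D ((↑X : Set V)ᶜ) C ∧ HasTailIn R C ∧
      ∀ U ∈ 𝒰, (C ∩ U).Nonempty := by
  obtain ⟨R, hR, htail⟩ := N.exists_isRay
  have hclosure (X : Finset V) : ∃ C, IsSCCIn D ((↑X : Set V)ᶜ) C ∧ HasTailIn R C ∧
      ∀ U ∈ 𝒰, (C ∩ U).Nonempty := by
    obtain ⟨n₀, hn₀⟩ := N.eventually_avoids X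
    obtain ⟨C, hC, hsub⟩ := N.exists_isSCCIn_of_tail_subset hn₀
    obtain ⟨k, hk⟩ := htail n₀
    obtain ⟨n, hnU, hn⟩ := hatt.exists_gt n₀
    refine ⟨C, hC, ⟨k, fun j hj => ?_⟩, fun U hU => (hnU U hU).mono ?_⟩
    · obtain ⟨m, hm, hjm⟩ := hk j hj
      exact hsub m hm hjm
    · exact Set.inter_subset_inter_left _ ((hsub n hn.le).trans' Set.subset_union_left)
  exact ⟨R, ⟨hR, fun X => (hclosure X).imp fun C h => ⟨h.1, h.2.1⟩⟩, hclosure⟩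

end Necklace

theorem exists_isVertexDirection_of_tails {D : V → V → Prop} {R : ℕ → V} {p : Set V → Prop}
    (h : ∀ X : Finset V, ∃ C, IsSCCIn D ((↑X : Set V)ᶜ) C ∧ HasTailIn R C ∧ p C) :
    ∃ f, IsVertexDirection D f ∧ ∀ X, p (f X) := by
  choose C hC htail hp using h
  refine ⟨C, ⟨hC, fun X Y hXY => ?_⟩, hp⟩
  obtain ⟨m, hm⟩ := htail X
  obtain ⟨n, hn⟩ := htail Y
  exact (hC Y).subset_of_mem (Set.compl_subset_compl.2 (by exact_mod_cast hXY)) (hC X)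
    (hn _ (le_max_right m n)) (hm _ (le_max_left m n))

/-- Equivalence of: an end in the closure of `𝒰`; a vertex-direction in the closure of `𝒰`;
a necklace attached to `𝒰`. -/
theorem end_direction_necklace_closure (D : V → V → Prop) (𝒰 : Finset (Set V)) :
    ((∃ R, Solid D R ∧ ∀ X : Finset V, ∃ C, IsSCCIn D ((↑X : Set V)ᶜ) C ∧ HasTailIn R C ∧
        ∀ U ∈ 𝒰, (C ∩ U).Nonempty) ↔
      (∃ f, IsVertexDirection D f ∧ ∀ X : Finset V, ∀ U ∈ 𝒰, (f X ∩ U).Nonempty)) ∧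
    ((∃ f, IsVertexDirection D f ∧ ∀ X : Finset V, ∀ U ∈ 𝒰, (f X ∩ U).Nonempty) ↔
      ∃ N : Necklace D, N.AttachedTo 𝒰) := by
  have end_dir : (∃ R, Solid D R ∧ ∀ X : Finset V, ∃ C, IsSCCIn D ((↑X : Set V)ᶜ) C ∧
      HasTailIn R C ∧ ∀ U ∈ 𝒰, (C ∩ U).Nonempty) →
      ∃ f, IsVertexDirection D f ∧ ∀ X : Finset V, ∀ U ∈ 𝒰, (f X ∩ U).Nonempty :=
    fun ⟨_, _, h⟩ => exists_isVertexDirection_of_tails h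
  have dir_neck : (∃ f, IsVertexDirection D f ∧ ∀ X : Finset V, ∀ U ∈ 𝒰, (f X ∩ U).Nonempty) →
      ∃ N : Necklace D, N.AttachedTo 𝒰 :=
    fun ⟨_, hf, hcl⟩ => hf.exists_attached_necklace hcl
  exact ⟨⟨end_dir, fun h => (dir_neck h).elim fun N hN => N.exists_end_in_closure hN⟩,
    ⟨dir_neck, fun ⟨N, hN⟩ => end_dir (N.exists_end_in_closure hN)⟩⟩
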